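/- arXiv:2001.06740 — 2 statements merged into one kernel-verified Lean document; each statement's English description precedes it below -/
import Mathlib

section
/- Let H be a Hilbert space, let P₁,…,P_k be orthogonal projections on H, and set A_k = P₁P₂⋯P_{k-1}P_kP_{k-1}⋯P₂P₁. Then the fixed-point space ker(A_k − 1) equals the intersection P₁H ∩ P₂H ∩ ⋯ ∩ P_kH. -/
/-!
With `C = P_k ⋯ P_1`, idempotence of `P_k` gives `A_k = C* C`, so `A_k x = x` forces
`‖C x‖ = ‖x‖`. Every `P_i` is a contraction that preserves the norm only of vectors in its
range, hence each factor of `C` fixes `x`.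
-/

open ContinuousLinearMap

theorem star_list_prod {R : Type*} [Monoid R] [StarMul R] (l : List R) :
    star l.prod = (l.map star).reverse.prod := by
  induction l with
  | nil => simp
  | cons a t ih => simp [ih]

theorem IsSelfAdjoint.star_list_prod {R : Type*} [Monoid R] [StarMul R] {l : List R}
    (hl : ∀ a ∈ l, IsSelfAdjoint a) : star l.prod = l.reverse.prod := by
  rw [_root_.star_list_prod, List.map_congr_left (fun a ha => (hl a ha).star_eq), List.map_id']

theorem List.prod_mul_prod_reverse_eq_prod_mul_prod_dropLast_reverse {M : Type*} [Monoid M]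
    {l : List M} (hl : ∀ a ∈ l, IsIdempotentElem a) :
    l.prod * l.reverse.prod = l.prod * l.dropLast.reverse.prod := by
  rcases l.eq_nil_or_concat with rfl | ⟨t, a, rfl⟩
  · simp
  · have ha : a * a = a := hl a (by simp)
    simp [mul_assoc, ← mul_assoc a, ha]

namespace ContinuousLinearMap

theorem list_prod_apply_eq_self {R M : Type*} [Semiring R] [TopologicalSpace M]
    [AddCommMonoid M] [Module R M] {l : List (M →L[R] M)} {x : M} (h : ∀ p ∈ l, p x = x) :
    l.prod x = x := by
  induction l with
  | nil => simp
  | cons a t ih =>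
    rw [List.prod_cons, mul_apply_eq_comp, ih fun p hp => h p (by simp [hp]), h a (by simp)]

variable {𝕜 E : Type*} [RCLike 𝕜] [NormedAddCommGroup E] [InnerProductSpace 𝕜 E]
  [CompleteSpace E]

theorem norm_apply_eq_of_star_mul_self_apply_eq {T : E →L[𝕜] E} {x : E}
    (hx : (star T * T) x = x) : ‖T x‖ = ‖x‖ := by
  have hsq : ‖T x‖ ^ 2 = ‖x‖ ^ 2 := by
    rw [apply_norm_sq_eq_inner_adjoint_left, ← star_eq_adjoint, ← mul_def, hx,
      inner_self_eq_norm_sq]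
  exact (sq_eq_sq₀ (norm_nonneg _) (norm_nonneg _)).mp hsq

theorem IsStarProjection.norm_apply_le {p : E →L[𝕜] E} (hp : IsStarProjection p) (x : E) :
    ‖p x‖ ≤ ‖x‖ := by
  obtain ⟨_, hp⟩ := isStarProjection_iff_eq_starProjection_range.mp hp
  rw [hp]
  exact p.range.norm_starProjection_apply_le x

theorem IsStarProjection.norm_apply_eq_iff {p : E →L[𝕜] E} (hp : IsStarProjection p) {x : E} :
    ‖p x‖ = ‖x‖ ↔ p x = x := by
  obtain ⟨_, hp⟩ := isStarProjection_iff_eq_starProjection_range.mp hp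
  rw [hp, ← Submodule.mem_iff_norm_starProjection, Submodule.starProjection_eq_self_iff]

variable {l : List (E →L[𝕜] E)}

theorem norm_list_prod_apply_le (hl : ∀ p ∈ l, IsStarProjection p) (x : E) :
    ‖l.prod x‖ ≤ ‖x‖ := by
  induction l with
  | nil => simp
  | cons a t ih =>
    rw [List.prod_cons, mul_apply_eq_comp]
    exact ((hl a (by simp)).norm_apply_le _).trans (ih fun p hp => hl p (by simp [hp]))

theorem apply_eq_self_of_norm_list_prod_apply_eq (hl : ∀ p ∈ l, IsStarProjection p) {x : E}
    (hx : ‖l.prod x‖ = ‖x‖) : ∀ p ∈ l, p x = x := by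
  induction l with
  | nil => simp
  | cons a t ih =>
    have ha : IsStarProjection a := hl a (by simp)
    have ht : ∀ p ∈ t, IsStarProjection p := fun p hp => hl p (by simp [hp])
    rw [List.prod_cons, mul_apply_eq_comp] at hx
    have htx : ‖t.prod x‖ = ‖x‖ :=
      le_antisymm (norm_list_prod_apply_le ht x) (hx ▸ ha.norm_apply_le _)
    have hfix : ∀ p ∈ t, p x = x := ih ht htx
    rw [list_prod_apply_eq_self hfix] at hx
    simpa [ha.norm_apply_eq_iff.mp hx] using hfix

theorem star_list_prod_mul_list_prod_apply_eq_self_iff (hl : ∀ p ∈ l, IsStarProjection p)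
    {x : E} : (star l.prod * l.prod) x = x ↔ ∀ p ∈ l, p x = x := by
  refine ⟨fun hx => apply_eq_self_of_norm_list_prod_apply_eq hl
    (norm_apply_eq_of_star_mul_self_apply_eq hx), fun hfix => ?_⟩
  rw [IsSelfAdjoint.star_list_prod fun p hp => (hl p hp).isSelfAdjoint, mul_apply_eq_comp,
    list_prod_apply_eq_self hfix,
    list_prod_apply_eq_self fun p hp => hfix p (List.mem_reverse.mp hp)]

end ContinuousLinearMap

/-- For orthogonal projections `P 0, …, P (k-1)` and the symmetric product
`A = P 0 ⋯ P (k-1) ⋯ P 0`, the fixed point set of `A` is the intersection of the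
ranges of the `P i`. -/
theorem stmt2 {H : Type*} [NormedAddCommGroup H] [InnerProductSpace ℂ H] [CompleteSpace H]
    (k : ℕ) (P : Fin k → H →L[ℂ] H)
    (hidem : ∀ i, P i * P i = P i) (hsa : ∀ i, IsSelfAdjoint (P i)) :
    {x : H | ((List.ofFn P).prod * ((List.ofFn P).dropLast.reverse).prod) x = x}
      = ⋂ i, Set.range (P i) := by
  set l := List.ofFn P
  have hproj : ∀ p ∈ l, IsStarProjection p := by
    simpa [l] using fun i => (⟨hidem i, hsa i⟩ : IsStarProjection (P i))
  have hA : l.prod * l.dropLast.reverse.prod = star l.reverse.prod * l.reverse.prod := by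
    rw [IsSelfAdjoint.star_list_prod fun p hp => (hproj p (List.mem_reverse.mp hp)).isSelfAdjoint,
      List.reverse_reverse,
      List.prod_mul_prod_reverse_eq_prod_mul_prod_dropLast_reverse
        fun p hp => (hproj p hp).isIdempotentElem]
  have hrange (i : Fin k) (x : H) : x ∈ Set.range (P i) ↔ P i x = x := by
    simpa using
      LinearMap.IsIdempotentElem.mem_range_iff (IsIdempotentElem.toLinearMap (hidem i)) (x := x)
  ext x
  simp only [Set.mem_ofPred_eq, Set.mem_iInter, hrange, hA,
    star_list_prod_mul_list_prod_apply_eq_self_iff fun p hp => hproj p (List.mem_reverse.mp hp)]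
  simp [l]
end

section
/- Let H be a separable Hilbert space and P₁, P₂, … orthogonal projections on H. Set A_k = P₁⋯P_k⋯P₁. Suppose (m_k) and (n_k) are increasing sequences of natural numbers such that A_{m_k}^{n_k} converges in the strong operator topology to an orthogonal projection Q. Then Q is the orthogonal projection onto ⋂_{k=1}^∞ P_kH. -/
open scoped ComplexInnerProductSpace


/-- The symmetric product `A_k = P 0 ⋯ P (k-1) ⋯ P 0` of the first `k` projections. -/
noncomputable def symProd {H : Type*} [NormedAddCommGroup H] [InnerProductSpace ℂ H]
    (P : ℕ → H →L[ℂ] H) (k : ℕ) : H →L[ℂ] H :=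
  (List.ofFn fun i : Fin k => P i).prod * ((List.ofFn fun i : Fin k => P i).dropLast.reverse).prod

section Aux

variable {H : Type*} [NormedAddCommGroup H] [InnerProductSpace ℂ H] [CompleteSpace H]

/-- If `P` is a self-adjoint idempotent, then `⟪P ξ, P ξ⟫ = ⟪ξ, P ξ⟫`. -/
private lemma proj_inner {P : H →L[ℂ] H} (hidem : P * P = P) (hsa : IsSelfAdjoint P) (ξ : H) :
    ⟪P ξ, P ξ⟫ = ⟪ξ, P ξ⟫ := by
  have hsym := hsa.isSymmetric
  have hP2 : P (P ξ) = P ξ := by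
    have := congrArg (fun T : H →L[ℂ] H => T ξ) hidem
    simpa using this
  calc ⟪P ξ, P ξ⟫ = ⟪ξ, P (P ξ)⟫ := hsym ξ (P ξ)
    _ = ⟪ξ, P ξ⟫ := by rw [hP2]

private lemma proj_norm_le {P : H →L[ℂ] H} (hidem : P * P = P) (hsa : IsSelfAdjoint P) (ξ : H) :
    ‖P ξ‖ ≤ ‖ξ‖ := by
  have h1 : (‖P ξ‖ : ℝ) ^ 2 = RCLike.re ⟪ξ, P ξ⟫ := by
    rw [← proj_inner hidem hsa ξ]
    rw [← inner_self_eq_norm_sq (𝕜 := ℂ)]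
  have h2 : RCLike.re ⟪ξ, P ξ⟫ ≤ ‖ξ‖ * ‖P ξ‖ := by
    calc RCLike.re ⟪ξ, P ξ⟫ ≤ ‖(⟪ξ, P ξ⟫ : ℂ)‖ := RCLike.re_le_norm _
      _ ≤ ‖ξ‖ * ‖P ξ‖ := norm_inner_le_norm _ _
  nlinarith [norm_nonneg (P ξ), norm_nonneg ξ]

private lemma proj_fix_of_norm_eq {P : H →L[ℂ] H} (hidem : P * P = P) (hsa : IsSelfAdjoint P)
    {ξ : H} (h : ‖P ξ‖ = ‖ξ‖) : P ξ = ξ := by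
  have key : ‖ξ - P ξ‖ ^ 2 = ‖ξ‖ ^ 2 - ‖P ξ‖ ^ 2 := by
    have hre : RCLike.re ⟪ξ, P ξ⟫ = ‖P ξ‖ ^ 2 := by
      rw [← proj_inner hidem hsa ξ, inner_self_eq_norm_sq (𝕜 := ℂ)]
    have := norm_sub_sq (𝕜 := ℂ) ξ (P ξ)
    rw [this, hre]; ring
  have : ‖ξ - P ξ‖ ^ 2 = 0 := by rw [key, h]; ring
  have : ‖ξ - P ξ‖ = 0 := by
    nlinarith [norm_nonneg (ξ - P ξ)]
  have := norm_eq_zero.mp this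
  have := sub_eq_zero.mp this
  exact this.symm

/-- `lprod P k = P 0 * P 1 * ⋯ * P (k-1)`. -/
noncomputable def lprod (P : ℕ → H →L[ℂ] H) : ℕ → H →L[ℂ] H
  | 0 => 1
  | (k + 1) => lprod P k * P k

/-- `rprod P k = P (k-1) * ⋯ * P 1 * P 0`. -/
noncomputable def rprod (P : ℕ → H →L[ℂ] H) : ℕ → H →L[ℂ] H
  | 0 => 1
  | (k + 1) => P k * rprod P k

private lemma ofFn_prod_eq_lprod (P : ℕ → H →L[ℂ] H) :
    ∀ k, (List.ofFn fun i : Fin k => P i).prod = lprod P k := by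
  intro k
  induction k with
  | zero => simp [lprod]
  | succ k ih =>
      rw [List.ofFn_succ']
      simp only [List.concat_eq_append, List.prod_append, List.prod_cons, List.prod_nil,
        Fin.coe_castSucc, Fin.val_last]
      rw [lprod]
      simp [ih]

private lemma ofFn_reverse_prod_eq_rprod (P : ℕ → H →L[ℂ] H) :
    ∀ k, ((List.ofFn fun i : Fin k => P i).reverse).prod = rprod P k := by
  intro k
  induction k with
  | zero => simp [rprod]
  | succ k ih =>
      rw [List.ofFn_succ']
      simp only [List.concat_eq_append, List.reverse_append, List.reverse_cons, List.reverse_nil,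
        List.nil_append, List.cons_append, List.prod_cons, Fin.coe_castSucc, Fin.val_last]
      rw [rprod]
      simp [ih]

private lemma symProd_eq (P : ℕ → H →L[ℂ] H) (k : ℕ) :
    symProd P k = lprod P k * rprod P (k - 1) := by
  cases k with
  | zero => simp [symProd, lprod, rprod]
  | succ k =>
      unfold symProd
      rw [ofFn_prod_eq_lprod]
      congr 1
      have hdl : (List.ofFn fun i : Fin (k + 1) => P i).dropLast
          = (List.ofFn fun i : Fin k => P i) := by
        rw [List.ofFn_succ']
        simp only [List.concat_eq_append]
        rw [List.dropLast_concat]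
        simp
      rw [hdl, ofFn_reverse_prod_eq_rprod]
      simp

variable {P : ℕ → H →L[ℂ] H}

private lemma lprod_contraction (hc : ∀ i ξ, ‖P i ξ‖ ≤ ‖ξ‖) (k : ℕ) (ξ : H) :
    ‖lprod P k ξ‖ ≤ ‖ξ‖ := by
  induction k generalizing ξ with
  | zero => simp [lprod]
  | succ k ih =>
      rw [lprod]
      calc ‖(lprod P k * P k) ξ‖ = ‖lprod P k (P k ξ)‖ := rfl
        _ ≤ ‖P k ξ‖ := ih _
        _ ≤ ‖ξ‖ := hc k ξ

private lemma rprod_contraction (hc : ∀ i ξ, ‖P i ξ‖ ≤ ‖ξ‖) (k : ℕ) (ξ : H) :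
    ‖rprod P k ξ‖ ≤ ‖ξ‖ := by
  induction k with
  | zero => simp [rprod]
  | succ k ih =>
      rw [rprod]
      calc ‖(P k * rprod P k) ξ‖ = ‖P k (rprod P k ξ)‖ := rfl
        _ ≤ ‖rprod P k ξ‖ := hc k _
        _ ≤ ‖ξ‖ := ih

private lemma rprod_fix {ξ : H} (k : ℕ) (h : ∀ j < k, P j ξ = ξ) : rprod P k ξ = ξ := by
  induction k with
  | zero => simp [rprod]
  | succ k ih =>
      rw [rprod]
      have h1 : rprod P k ξ = ξ := ih (fun j hj => h j (Nat.lt_succ_of_lt hj))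
      calc (P k * rprod P k) ξ = P k (rprod P k ξ) := rfl
        _ = P k ξ := by rw [h1]
        _ = ξ := h k (Nat.lt_succ_self k)

private lemma rprod_norm_anti (hc : ∀ i ξ, ‖P i ξ‖ ≤ ‖ξ‖) (ξ : H) {i k : ℕ} (hik : i ≤ k) :
    ‖rprod P k ξ‖ ≤ ‖rprod P i ξ‖ := by
  induction k with
  | zero => simp_all
  | succ k ih =>
      rcases Nat.lt_or_ge i (k + 1) with h | h
      · have := ih (Nat.lt_succ_iff.mp h)
        rw [rprod]
        calc ‖(P k * rprod P k) ξ‖ = ‖P k (rprod P k ξ)‖ := rfl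
          _ ≤ ‖rprod P k ξ‖ := hc k _
          _ ≤ _ := this
      · have : i = k + 1 := le_antisymm hik h
        rw [this]

private lemma pow_contraction {A : H →L[ℂ] H} (hc : ∀ ξ, ‖A ξ‖ ≤ ‖ξ‖) (nn : ℕ) (ξ : H) :
    ‖(A ^ nn) ξ‖ ≤ ‖ξ‖ := by
  induction nn generalizing ξ with
  | zero => simp
  | succ nn ih =>
      rw [pow_succ]
      calc ‖(A ^ nn * A) ξ‖ = ‖(A ^ nn) (A ξ)‖ := rfl
        _ ≤ ‖A ξ‖ := ih _
        _ ≤ ‖ξ‖ := hc ξ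

private lemma lprod_fix {ξ : H} (k : ℕ) (h : ∀ j, P j ξ = ξ) : lprod P k ξ = ξ := by
  induction k generalizing ξ with
  | zero => simp [lprod]
  | succ k ih =>
      rw [lprod]
      calc (lprod P k * P k) ξ = lprod P k (P k ξ) := rfl
        _ = lprod P k ξ := by rw [h k]
        _ = ξ := ih h

private lemma pow_fix {A : H →L[ℂ] H} {ξ : H} (h : A ξ = ξ) (nn : ℕ) : (A ^ nn) ξ = ξ := by
  induction nn with
  | zero => simp
  | succ nn ih =>
      rw [pow_succ]
      calc (A ^ nn * A) ξ = (A ^ nn) (A ξ) := rfl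
        _ = (A ^ nn) ξ := by rw [h]
        _ = ξ := ih

end Aux

/-- If, for increasing sequences `m, n`, the powers `A_{m_k}^{n_k}` of the symmetric products
converge strongly to an orthogonal projection `Q`, then `Q` is the orthogonal projection onto
`⋂ k, P k H`, i.e. its range is `⋂ k, range (P k)`. -/
theorem stmt18 {H : Type*} [NormedAddCommGroup H] [InnerProductSpace ℂ H] [CompleteSpace H]
    [SecondCountableTopology H]
    (P : ℕ → H →L[ℂ] H) (hidem : ∀ i, P i * P i = P i) (hsa : ∀ i, IsSelfAdjoint (P i))
    (m n : ℕ → ℕ) (hm : StrictMono m) (hn : StrictMono n)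
    (Q : H →L[ℂ] H) (hQidem : Q * Q = Q) (hQsa : IsSelfAdjoint Q)
    (hconv : ∀ ξ : H,
      Filter.Tendsto (fun k => (symProd P (m k) ^ n k) ξ) Filter.atTop (nhds (Q ξ))) :
    Set.range Q = ⋂ i, Set.range (P i) := by
  have hc : ∀ i ξ, ‖P i ξ‖ ≤ ‖ξ‖ := fun i => proj_norm_le (hidem i) (hsa i)
  have hsc : ∀ k ξ, ‖symProd P k ξ‖ ≤ ‖ξ‖ := by
    intro k ξ
    rw [symProd_eq]
    calc ‖(lprod P k * rprod P (k - 1)) ξ‖ = ‖lprod P k (rprod P (k - 1) ξ)‖ := rfl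
      _ ≤ ‖rprod P (k - 1) ξ‖ := lprod_contraction hc _ _
      _ ≤ ‖ξ‖ := rprod_contraction hc _ _
  have hrange : ∀ (T : H →L[ℂ] H), T * T = T → ∀ ξ : H, (ξ ∈ Set.range T ↔ T ξ = ξ) := by
    intro T hT ξ
    constructor
    · rintro ⟨η, rfl⟩
      have := congrArg (fun S : H →L[ℂ] H => S η) hT
      simpa using this
    · intro h; exact ⟨ξ, h⟩
  ext ξ
  rw [hrange Q hQidem ξ]
  simp only [Set.mem_iInter]
  constructor
  · intro hQξ i
    rw [hrange _ (hidem i) ξ]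
    induction i using Nat.strong_induction_on with
    | _ i ih =>
      have hle : ‖Q ξ‖ ≤ ‖P i ξ‖ := by
        apply le_of_tendsto ((hconv ξ).norm)
        filter_upwards [Filter.eventually_ge_atTop (i + 2)] with k hk
        have hmk : i + 2 ≤ m k := le_trans hk hm.le_apply
        have hnk : 1 ≤ n k := le_trans (by omega) hn.le_apply
        obtain ⟨n', hn'⟩ : ∃ n', n k = n' + 1 := ⟨n k - 1, by omega⟩
        rw [hn']
        have hfixr : rprod P i ξ = ξ := rprod_fix i (fun j hj => ih j hj)
        have step : ‖symProd P (m k) ξ‖ ≤ ‖P i ξ‖ := by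
          rw [symProd_eq]
          calc ‖(lprod P (m k) * rprod P (m k - 1)) ξ‖
              = ‖lprod P (m k) (rprod P (m k - 1) ξ)‖ := rfl
            _ ≤ ‖rprod P (m k - 1) ξ‖ := lprod_contraction hc _ _
            _ ≤ ‖rprod P (i + 1) ξ‖ := rprod_norm_anti hc ξ (by omega)
            _ = ‖P i (rprod P i ξ)‖ := rfl
            _ = ‖P i ξ‖ := by rw [hfixr]
        calc ‖(symProd P (m k) ^ (n' + 1)) ξ‖
            = ‖(symProd P (m k) ^ n') (symProd P (m k) ξ)‖ := by rw [pow_succ]; rfl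
          _ ≤ ‖symProd P (m k) ξ‖ := pow_contraction (hsc _) _ _
          _ ≤ ‖P i ξ‖ := step
      rw [hQξ] at hle
      exact proj_fix_of_norm_eq (hidem i) (hsa i) (le_antisymm (hc i ξ) hle)
  · intro hfix
    have hfix' : ∀ i, P i ξ = ξ := fun i => (hrange _ (hidem i) ξ).mp (hfix i)
    have hsym : ∀ k, symProd P k ξ = ξ := by
      intro k
      rw [symProd_eq]
      calc (lprod P k * rprod P (k - 1)) ξ = lprod P k (rprod P (k - 1) ξ) := rfl
        _ = lprod P k ξ := by rw [rprod_fix _ (fun j _ => hfix' j)]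
        _ = ξ := lprod_fix _ hfix'
    have : Filter.Tendsto (fun k => (symProd P (m k) ^ n k) ξ) Filter.atTop (nhds ξ) := by
      have heq : (fun k => (symProd P (m k) ^ n k) ξ) = fun _ => ξ := by
        funext k
        exact pow_fix (hsym (m k)) (n k)
      rw [heq]
      exact tendsto_const_nhds
    exact tendsto_nhds_unique (hconv ξ) this
end
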